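/- (Smooth-payoff version of Theorem 3.1.) Let N ∈ ℕ, M = 2^{N+1}, Λ'_N = {(n,k) : 0 ≤ n ≤ N, 0 ≤ k < 2^n}. For y ∈ ℝ and z ∈ ℝ^{Λ'_N} set w_ℓ(y,z) = y·Δ^N_ℓ Ψ_{−1} + Σ_{(n,k)∈Λ'_N} z_{n,k}·Δ^N_ℓ Ψ_{n,k} for ℓ = 0, …, M−1. Let p ≥ 1, let g : ℝ → ℝ be p-times continuously differentiable with g and all its derivatives up to order p bounded, and let F : ℝ^M → ℝ be p-times continuously differentiable with all partial derivatives of orders 1 through p bounded globally by a constant c. Define H(z) = ∫_ℝ g(F(w(y,z))) φ(y) dy, where φ is the standard normal density. Then H is p-times differentiable and there exists a constant C, depending only on p, c and the bounds on g and its derivatives (in particular independent of N and of the indices n_j, k_j), such that for all (n_1,k_1), …, (n_p,k_p) ∈ Λ'_N, |∂^p H / ∂z_{n_1,k_1} ⋯ ∂z_{n_p,k_p}(z)| ≤ C · 2^{−(n_1 + ⋯ + n_p)/2} for every z. -/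

import Mathlib

open MeasureTheory

/-- The Haar mother wavelet. -/
noncomputable def haarMother (t : ℝ) : ℝ :=
  if 0 ≤ t ∧ t < 1/2 then 1 else if 1/2 ≤ t ∧ t < 1 then -1 else 0

/-- The Haar function ψ_{n,k}. -/
noncomputable def haarFn (n k : ℕ) (t : ℝ) : ℝ :=
  (2:ℝ) ^ ((n : ℝ)/2) * haarMother ((2:ℝ)^n * t - k)

/-- The antiderivative Ψ_{n,k}(t) = ∫_0^t ψ_{n,k}(s) ds. -/
noncomputable def haarAnti (n k : ℕ) (t : ℝ) : ℝ := ∫ s in (0:ℝ)..t, haarFn n k s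

/-- The function ψ_{-1} = 1_{[0,1]}. -/
noncomputable def haarNeg (t : ℝ) : ℝ := Set.indicator (Set.Icc (0:ℝ) 1) (fun _ => 1) t

/-- The antiderivative Ψ_{-1}(t) = ∫_0^t ψ_{-1}(s) ds. -/
noncomputable def haarNegAnti (t : ℝ) : ℝ := ∫ s in (0:ℝ)..t, haarNeg s

/-- The dyadic grid point t^N_ℓ = ℓ / 2^{N+1}. -/
noncomputable def gridPt (N ℓ : ℕ) : ℝ := (ℓ : ℝ) / 2 ^ (N+1)

/-- The index set Λ'_N = {(n,k) : 0 ≤ n ≤ N, 0 ≤ k < 2^n}. -/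
abbrev HaarIdx' (N : ℕ) := (n : Fin (N+1)) × Fin (2^(n:ℕ))

/-- The standard normal density φ(y) = (2π)^{-1/2} exp(-y²/2). -/
noncomputable def stdGaussPDF (y : ℝ) : ℝ :=
  (Real.sqrt (2 * Real.pi))⁻¹ * Real.exp (-y^2/2)

/-- The Brownian-increment map
`w_ℓ(y,z) = y Δ^N_ℓ Ψ_{-1} + Σ_{(n,k) ∈ Λ'_N} z_{n,k} Δ^N_ℓ Ψ_{n,k}`. -/
noncomputable def wMapY (N : ℕ) (y : ℝ) (z : HaarIdx' N → ℝ) : Fin (2^(N+1)) → ℝ :=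
  fun ℓ =>
    y * (haarNegAnti (gridPt N ((ℓ : ℕ)+1)) - haarNegAnti (gridPt N (ℓ : ℕ))) +
      ∑ i : HaarIdx' N,
        z i * (haarAnti i.1 i.2 (gridPt N ((ℓ : ℕ)+1)) - haarAnti i.1 i.2 (gridPt N (ℓ : ℕ)))

/-!
Write `u = g ∘ F`, `a` for the increments of `Ψ_{-1}` and `L` for the linear map taking Haar
coefficients to Brownian increments, so that `H(z) = ∫ φ(y) u(y a + L z) dy`. As all derivatives
of `u` up to order `p` are bounded, differentiation passes under the Gaussian integral and
`∂^p H(z)[e_{i_1}, …, e_{i_p}] = ∫ φ(y) D^p u(y a + L z)[L e_{i_1}, …, L e_{i_p}] dy`.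
Expanding each `L e_i` in coordinates bounds the integrand by a bound on the coordinate partial
derivatives of `u` (Faà di Bruno: `#OrderedFinpartition p · Cg · max 1 c ^ p`, independent of `N`)
times `∏ j, ‖L e_{i_j}‖₁`, and `‖L e_{n,k}‖₁ ≤ ∫ |ψ_{n,k}| = 2^{-n/2}`.
-/

section ParametricIntegral

variable {α E G : Type*} [MeasurableSpace α] {μ : Measure α}
  [NormedAddCommGroup E] [NormedAddCommGroup G] [NormedSpace ℝ G]
  {ρ : α → ℝ} {f : α → E}

theorem integrable_smul_comp_add (hρ : Integrable ρ μ) (hf : AEStronglyMeasurable f μ)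
    {v : E → G} (hv : Continuous v) {B : ℝ} (hB : ∀ x, ‖v x‖ ≤ B) (x : E) :
    Integrable (fun y => ρ y • v (f y + x)) μ := by
  refine (hρ.norm.mul_const B).mono'
    (hρ.aestronglyMeasurable.smul (hv.comp_aestronglyMeasurable (hf.add_const x))) ?_
  filter_upwards with y
  rw [norm_smul]
  exact mul_le_mul_of_nonneg_left (hB _) (norm_nonneg _)

theorem continuous_integral_smul_comp_add (hρ : Integrable ρ μ) (hf : AEStronglyMeasurable f μ)
    {v : E → G} (hv : Continuous v) {B : ℝ} (hB : ∀ x, ‖v x‖ ≤ B) :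
    Continuous fun x => ∫ y, ρ y • v (f y + x) ∂μ := by
  refine continuous_of_dominated
    (fun x => (integrable_smul_comp_add hρ hf hv hB x).aestronglyMeasurable)
    (fun x => ?_) (hρ.norm.mul_const B) ?_
  · filter_upwards with y
    rw [norm_smul]
    exact mul_le_mul_of_nonneg_left (hB _) (norm_nonneg _)
  · filter_upwards with y
    exact continuous_const.smul (hv.comp (continuous_const.add continuous_id))

variable [NormedSpace ℝ E]

theorem hasFDerivAt_integral_smul_comp_add (hρ : Integrable ρ μ) (hf : AEStronglyMeasurable f μ)
    {v : E → G} (hv : ContDiff ℝ 1 v) {B₀ B₁ : ℝ} (hB₀ : ∀ x, ‖v x‖ ≤ B₀)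
    (hB₁ : ∀ x, ‖fderiv ℝ v x‖ ≤ B₁) (x : E) :
    HasFDerivAt (fun x => ∫ y, ρ y • v (f y + x) ∂μ) (∫ y, ρ y • fderiv ℝ v (f y + x) ∂μ) x := by
  have hv' : Continuous (fderiv ℝ v) := hv.continuous_fderiv one_ne_zero
  refine hasFDerivAt_integral_of_dominated_of_fderiv_le
    (F' := fun x y => ρ y • fderiv ℝ v (f y + x)) (bound := fun y => ‖ρ y‖ * B₁)
    Filter.univ_mem (Filter.Eventually.of_forall fun x =>
      (integrable_smul_comp_add hρ hf hv.continuous hB₀ x).aestronglyMeasurable)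
    (integrable_smul_comp_add hρ hf hv.continuous hB₀ x)
    (integrable_smul_comp_add hρ hf hv' hB₁ x).aestronglyMeasurable ?_ (hρ.norm.mul_const B₁) ?_
  · filter_upwards with y x' _
    rw [norm_smul]
    exact mul_le_mul_of_nonneg_left (hB₁ _) (norm_nonneg _)
  · filter_upwards with y x' _
    have hvx := ((hv.differentiable one_ne_zero) (f y + x')).hasFDerivAt
    have h := (hvx.comp x' ((hasFDerivAt_id x').const_add (f y))).const_smul (ρ y)
    rw [ContinuousLinearMap.comp_id] at h
    exact h

variable {u : E → G} {p : ℕ}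

theorem hasFDerivAt_integral_smul_iteratedFDeriv_comp_add (hρ : Integrable ρ μ)
    (hf : AEStronglyMeasurable f μ) (hu : ContDiff ℝ p u)
    (hbdd : ∀ j ≤ p, ∃ B, ∀ x, ‖iteratedFDeriv ℝ j u x‖ ≤ B) {n : ℕ} (hn : n < p) (x : E) :
    HasFDerivAt (fun x => ∫ y, ρ y • iteratedFDeriv ℝ n u (f y + x) ∂μ)
      (∫ y, ρ y • fderiv ℝ (iteratedFDeriv ℝ n u) (f y + x) ∂μ) x := by
  obtain ⟨B₀, hB₀⟩ := hbdd n hn.le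
  obtain ⟨B₁, hB₁⟩ := hbdd (n + 1) hn
  exact hasFDerivAt_integral_smul_comp_add hρ hf
    (hu.iteratedFDeriv_right (m := 1) (by exact_mod_cast (by omega : 1 + n ≤ p))) hB₀
    (fun x => (norm_fderiv_iteratedFDeriv (n := n)).trans_le (hB₁ x)) x

theorem iteratedFDeriv_integral_smul_comp_add (hρ : Integrable ρ μ)
    (hf : AEStronglyMeasurable f μ) (hu : ContDiff ℝ p u)
    (hbdd : ∀ j ≤ p, ∃ B, ∀ x, ‖iteratedFDeriv ℝ j u x‖ ≤ B) {n : ℕ} (hn : n ≤ p) :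
    iteratedFDeriv ℝ n (fun x => ∫ y, ρ y • u (f y + x) ∂μ) =
      fun x => ∫ y, ρ y • iteratedFDeriv ℝ n u (f y + x) ∂μ := by
  induction n with
  | zero =>
    ext1 x
    simp only [iteratedFDeriv_zero_eq_comp, Function.comp_apply]
    exact ((continuousMultilinearCurryFin0 ℝ E G).symm.toContinuousLinearEquiv.integral_comp_comm
      _).symm
  | succ n ih =>
    ext1 x
    simp only [iteratedFDeriv_succ_eq_comp_left, Function.comp_apply, ih (by omega),
      (hasFDerivAt_integral_smul_iteratedFDeriv_comp_add hρ hf hu hbdd hn x).fderiv]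
    exact (ContinuousLinearEquiv.integral_comp_comm (μ := μ) (𝕜 := ℝ)
      (E := E →L[ℝ] E [×n]→L[ℝ] G) (F := E [×n + 1]→L[ℝ] G)
      (continuousMultilinearCurryLeftEquiv ℝ (fun _ => E) G).symm.toContinuousLinearEquiv _).symm

theorem contDiff_integral_smul_comp_add (hρ : Integrable ρ μ) (hf : AEStronglyMeasurable f μ)
    (hu : ContDiff ℝ p u) (hbdd : ∀ j ≤ p, ∃ B, ∀ x, ‖iteratedFDeriv ℝ j u x‖ ≤ B) :
    ContDiff ℝ p fun x => ∫ y, ρ y • u (f y + x) ∂μ := by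
  refine contDiff_iff_continuous_differentiable.2 ⟨fun m hm => ?_, fun m hm => ?_⟩
  · have hm : m ≤ p := by exact_mod_cast hm
    obtain ⟨B, hB⟩ := hbdd m hm
    rw [iteratedFDeriv_integral_smul_comp_add hρ hf hu hbdd hm]
    exact continuous_integral_smul_comp_add hρ hf
      (hu.continuous_iteratedFDeriv (by exact_mod_cast hm)) hB
  · have hm : m < p := by exact_mod_cast hm
    rw [iteratedFDeriv_integral_smul_comp_add hρ hf hu hbdd hm.le]
    exact fun x =>
      (hasFDerivAt_integral_smul_iteratedFDeriv_comp_add hρ hf hu hbdd hm x).differentiableAt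

theorem norm_iteratedFDeriv_integral_smul_comp_add_apply_le [CompleteSpace G]
    (hρ : Integrable ρ μ) (hf : AEStronglyMeasurable f μ) (hu : ContDiff ℝ p u)
    (hbdd : ∀ j ≤ p, ∃ B, ∀ x, ‖iteratedFDeriv ℝ j u x‖ ≤ B) (m : Fin p → E) {K : ℝ}
    (hK : ∀ x, ‖iteratedFDeriv ℝ p u x m‖ ≤ K) (x : E) :
    ‖iteratedFDeriv ℝ p (fun x => ∫ y, ρ y • u (f y + x) ∂μ) x m‖ ≤ (∫ y, ‖ρ y‖ ∂μ) * K := by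
  obtain ⟨B, hB⟩ := hbdd p le_rfl
  have hint := integrable_smul_comp_add hρ hf (hu.continuous_iteratedFDeriv le_rfl) hB x
  have happly : (∫ y, ρ y • iteratedFDeriv ℝ p u (f y + x) ∂μ) m =
      ∫ y, ρ y • iteratedFDeriv ℝ p u (f y + x) m ∂μ :=
    ((ContinuousMultilinearMap.apply ℝ (fun _ => E) G m).integral_comp_comm hint).symm
  rw [iteratedFDeriv_integral_smul_comp_add hρ hf hu hbdd le_rfl, happly, ← integral_mul_const]
  refine norm_integral_le_of_norm_le (hρ.norm.mul_const K)
    (Filter.Eventually.of_forall fun y => ?_)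
  rw [norm_smul]
  exact mul_le_mul_of_nonneg_left (hK _) (norm_nonneg _)

end ParametricIntegral

section CoordinateBounds

variable {ι G : Type*} [Fintype ι] [DecidableEq ι] [NormedAddCommGroup G] [NormedSpace ℝ G]
  {q : ℕ}

theorem ContinuousMultilinearMap.apply_eq_sum_prod_smul_single
    (m : ContinuousMultilinearMap ℝ (fun _ : Fin q => ι → ℝ) G) (v : Fin q → ι → ℝ) :
    m v = ∑ r : Fin q → ι, (∏ i, v i (r i)) • m (fun i => Pi.single (r i) 1) := by
  have hv : v = fun i => ∑ ℓ, v i ℓ • (Pi.single ℓ 1 : ι → ℝ) := by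
    ext i ℓ
    simp [Pi.single_apply]
  conv_lhs => rw [hv, m.map_sum]
  exact Finset.sum_congr rfl fun r _ => m.map_smul_univ _ _

theorem ContinuousMultilinearMap.norm_apply_le_of_norm_apply_single_le
    (m : ContinuousMultilinearMap ℝ (fun _ : Fin q => ι → ℝ) G) {K : ℝ}
    (hK : ∀ r : Fin q → ι, ‖m (fun i => Pi.single (r i) 1)‖ ≤ K) (v : Fin q → ι → ℝ) :
    ‖m v‖ ≤ K * ∏ i, ∑ ℓ, ‖v i ℓ‖ := by
  rw [m.apply_eq_sum_prod_smul_single, Finset.prod_univ_sum, Fintype.piFinset_univ,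
    Finset.mul_sum]
  refine (norm_sum_le _ _).trans (Finset.sum_le_sum fun r _ => ?_)
  rw [norm_smul, norm_prod, mul_comm]
  exact mul_le_mul_of_nonneg_right (hK r) (Finset.prod_nonneg fun _ _ => norm_nonneg _)

theorem ContinuousMultilinearMap.norm_le_of_norm_apply_single_le [Nonempty ι]
    (m : ContinuousMultilinearMap ℝ (fun _ : Fin q => ι → ℝ) G) {K : ℝ}
    (hK : ∀ r : Fin q → ι, ‖m (fun i => Pi.single (r i) 1)‖ ≤ K) :
    ‖m‖ ≤ Fintype.card ι ^ q * K := by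
  have hK0 : 0 ≤ K := (norm_nonneg _).trans (hK fun _ => Classical.arbitrary ι)
  refine m.opNorm_le_bound (by positivity) fun v => ?_
  calc ‖m v‖ ≤ K * ∏ i, ∑ ℓ, ‖v i ℓ‖ := m.norm_apply_le_of_norm_apply_single_le hK v
    _ ≤ K * ∏ i, (Fintype.card ι * ‖v i‖) := by
      gcongr with i
      simpa using Pi.sum_norm_apply_le_norm (v i)
    _ = Fintype.card ι ^ q * K * ∏ i, ‖v i‖ := by
      rw [Finset.prod_mul_distrib, Finset.prod_const, Finset.card_univ, Fintype.card_fin]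
      ring

end CoordinateBounds

section FaaDiBruno

variable {𝕜 E F G : Type*} [NontriviallyNormedField 𝕜] [NormedAddCommGroup E] [NormedSpace 𝕜 E]
  [NormedAddCommGroup F] [NormedSpace 𝕜 F] [NormedAddCommGroup G] [NormedSpace 𝕜 G]

theorem iteratedFDeriv_comp_eq_taylorComp {n : WithTop ℕ∞} {g : F → G} {f : E → F}
    (hg : ContDiff 𝕜 n g) (hf : ContDiff 𝕜 n f) {i : ℕ} (hi : i ≤ n) (x : E) :
    iteratedFDeriv 𝕜 i (g ∘ f) x =
      (ftaylorSeries 𝕜 g (f x)).taylorComp (ftaylorSeries 𝕜 f x) i := by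
  have h := (hasFTaylorSeriesUpToOn_univ_iff.2 hg.ftaylorSeries).comp
    (hasFTaylorSeriesUpToOn_univ_iff.2 hf.ftaylorSeries) (Set.mapsTo_univ _ _)
  exact ((hasFTaylorSeriesUpToOn_univ_iff.1 h).eq_iteratedFDeriv hi x).symm

theorem abs_iteratedFDeriv_comp_apply_le [NormedSpace ℝ E] {g : ℝ → ℝ} {f : E → ℝ} {p : ℕ}
    {Cg c : ℝ} (hg : ContDiff ℝ p g) (hf : ContDiff ℝ p f) (x : E)
    (hgb : ∀ j ≤ p, |iteratedDeriv j g (f x)| ≤ Cg) (v : Fin p → E)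
    (hfb : ∀ j, 1 ≤ j → j ≤ p → ∀ w : Fin j → Fin p,
      |iteratedFDeriv ℝ j f x (fun i => v (w i))| ≤ c) :
    |iteratedFDeriv ℝ p (g ∘ f) x v| ≤
      Fintype.card (OrderedFinpartition p) * (Cg * max 1 c ^ p) := by
  -- Faà di Bruno: `D^p (g ∘ f) x` is a sum over ordered partitions of `Fin p`, each term being
  -- `g^{(#parts)} (f x)` applied to the derivatives of `f` along the parts.
  have hpart : ∀ cpt : OrderedFinpartition p,
      |(ftaylorSeries ℝ g (f x)).compAlongOrderedFinpartition (ftaylorSeries ℝ f x) cpt v| ≤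
        Cg * max 1 c ^ p := by
    intro cpt
    rw [FormalMultilinearSeries.compAlongOrderedFinpartition_apply, ftaylorSeries,
      iteratedFDeriv_apply_eq_iteratedDeriv_mul_prod, smul_eq_mul, abs_mul, Finset.abs_prod,
      mul_comm]
    refine mul_le_mul (hgb _ cpt.length_le) ?_ (Finset.prod_nonneg fun _ _ => abs_nonneg _)
      ((abs_nonneg _).trans (hgb _ cpt.length_le))
    calc ∏ m, |cpt.applyOrderedFinpartition (fun m => ftaylorSeries ℝ f x (cpt.partSize m)) v m|
        ≤ ∏ _m : Fin cpt.length, max 1 c := by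
          refine Finset.prod_le_prod (fun _ _ => abs_nonneg _) fun m _ => ?_
          rw [cpt.applyOrderedFinpartition_apply]
          exact (hfb _ (cpt.partSize_pos m) (cpt.partSize_le m) _).trans (le_max_right 1 c)
      _ ≤ max 1 c ^ p := by
          rw [Finset.prod_const, Finset.card_univ, Fintype.card_fin]
          exact pow_le_pow_right₀ (le_max_left 1 c) cpt.length_le
  rw [iteratedFDeriv_comp_eq_taylorComp hg hf le_rfl, FormalMultilinearSeries.taylorComp,
    _root_.sum_apply]
  refine (Finset.abs_sum_le_sum_abs _ _).trans ((Finset.sum_le_sum fun cpt _ => hpart cpt).trans ?_)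
  rw [Finset.sum_const, Finset.card_univ, nsmul_eq_mul]

end FaaDiBruno

theorem stdGaussPDF_eq_gaussianPDFReal : stdGaussPDF = ProbabilityTheory.gaussianPDFReal 0 1 := by
  ext y
  simp [stdGaussPDF, ProbabilityTheory.gaussianPDFReal]

theorem integrable_stdGaussPDF : Integrable stdGaussPDF := by
  rw [stdGaussPDF_eq_gaussianPDFReal]
  exact ProbabilityTheory.integrable_gaussianPDFReal 0 1

theorem integral_norm_stdGaussPDF : ∫ y, ‖stdGaussPDF y‖ = 1 := by
  simp only [stdGaussPDF_eq_gaussianPDFReal, Real.norm_eq_abs,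
    abs_of_nonneg (ProbabilityTheory.gaussianPDFReal_nonneg _ _ _)]
  exact ProbabilityTheory.integral_gaussianPDFReal_eq_one 0 one_ne_zero

theorem measurable_haarMother : Measurable haarMother :=
  Measurable.ite (measurableSet_Ico (a := 0) (b := 1 / 2)) measurable_const
    (Measurable.ite (measurableSet_Ico (a := 1 / 2) (b := 1)) measurable_const measurable_const)

theorem abs_haarMother_le (s : ℝ) : |haarMother s| ≤ (Set.Ico (0:ℝ) 1).indicator 1 s := by
  unfold haarMother Set.indicator
  split_ifs <;> simp_all [Set.mem_Ico] <;> linarith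

theorem abs_haarFn_le (n k : ℕ) (t : ℝ) :
    |haarFn n k t| ≤
      2 ^ ((n : ℝ) / 2) * (Set.Ico ((k : ℝ) / 2 ^ n) ((k + 1) / 2 ^ n)).indicator 1 t := by
  have h2n : (0 : ℝ) < 2 ^ n := by positivity
  have hmem : (2 : ℝ) ^ n * t - k ∈ Set.Ico 0 1 ↔
      t ∈ Set.Ico ((k : ℝ) / 2 ^ n) ((k + 1) / 2 ^ n) := by
    simp only [Set.mem_Ico, div_le_iff₀ h2n, lt_div_iff₀ h2n]
    constructor <;> rintro ⟨h1, h2⟩ <;> constructor <;> linarith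
  rw [haarFn, abs_mul, abs_of_pos (by positivity)]
  gcongr
  refine (abs_haarMother_le _).trans_eq ?_
  simp only [Set.indicator_apply, hmem, Pi.one_apply]

theorem integrable_const_mul_indicator_Ico (C a b : ℝ) :
    Integrable fun t => C * (Set.Ico a b).indicator 1 t :=
  ((integrable_indicator_iff measurableSet_Ico).2
    (integrableOn_const (C := (1 : ℝ)) measure_Ico_lt_top.ne)).const_mul C

theorem integrable_haarFn (n k : ℕ) : Integrable (haarFn n k) :=
  (integrable_const_mul_indicator_Ico _ _ _).mono'
    ((measurable_haarMother.comp (by fun_prop)).const_mul _).aestronglyMeasurable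
    (Filter.Eventually.of_forall (abs_haarFn_le n k))

theorem integral_abs_haarFn_le (n k : ℕ) : ∫ t, |haarFn n k t| ≤ 2 ^ (-(n : ℝ) / 2) := by
  have hlen : ((k : ℝ) + 1) / 2 ^ n - k / 2 ^ n = ((2 : ℝ) ^ n)⁻¹ := by field_simp; ring
  calc ∫ t, |haarFn n k t|
      ≤ ∫ t, 2 ^ ((n : ℝ) / 2) * (Set.Ico ((k : ℝ) / 2 ^ n) ((k + 1) / 2 ^ n)).indicator 1 t :=
        integral_mono (integrable_haarFn n k).abs (integrable_const_mul_indicator_Ico _ _ _)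
          (abs_haarFn_le n k)
    _ = 2 ^ ((n : ℝ) / 2) * ((2 : ℝ) ^ n)⁻¹ := by
        rw [integral_const_mul, integral_indicator_one measurableSet_Ico,
          Real.volume_real_Ico_of_le (by gcongr; linarith), hlen]
    _ = 2 ^ (-(n : ℝ) / 2) := by
        rw [show -(n : ℝ) / 2 = n / 2 - n by ring, Real.rpow_sub two_pos, Real.rpow_natCast,
          ← div_eq_mul_inv]

theorem sum_abs_intervalIntegral_le_integral_abs {f : ℝ → ℝ} (hf : Integrable f) {t : ℕ → ℝ}
    (ht : Monotone t) (M : ℕ) :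
    ∑ ℓ ∈ Finset.range M, |∫ s in t ℓ..t (ℓ + 1), f s| ≤ ∫ s, |f s| :=
  calc ∑ ℓ ∈ Finset.range M, |∫ s in t ℓ..t (ℓ + 1), f s|
      ≤ ∑ ℓ ∈ Finset.range M, ∫ s in t ℓ..t (ℓ + 1), |f s| :=
        Finset.sum_le_sum fun ℓ _ => intervalIntegral.abs_integral_le_integral_abs (ht ℓ.le_succ)
    _ = ∫ s in t 0..t M, |f s| :=
        intervalIntegral.sum_integral_adjacent_intervals fun _ _ => hf.abs.intervalIntegrable
    _ ≤ ∫ s, |f s| := by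
        rw [intervalIntegral.integral_of_le (ht M.zero_le)]
        exact setIntegral_le_integral hf.abs (Filter.Eventually.of_forall fun _ => abs_nonneg _)

theorem monotone_gridPt (N : ℕ) : Monotone (gridPt N) := fun _ _ h => by
  unfold gridPt
  gcongr

noncomputable def haarIncr (N : ℕ) (i : HaarIdx' N) (ℓ : Fin (2 ^ (N + 1))) : ℝ :=
  haarAnti i.1 i.2 (gridPt N (ℓ + 1)) - haarAnti i.1 i.2 (gridPt N ℓ)

noncomputable def haarNegIncr (N : ℕ) (ℓ : Fin (2 ^ (N + 1))) : ℝ :=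
  haarNegAnti (gridPt N (ℓ + 1)) - haarNegAnti (gridPt N ℓ)

noncomputable def haarIncrMap (N : ℕ) : (HaarIdx' N → ℝ) →L[ℝ] (Fin (2 ^ (N + 1)) → ℝ) :=
  LinearMap.toContinuousLinearMap (Fintype.linearCombination ℝ (haarIncr N))

theorem haarIncrMap_single (N : ℕ) (i : HaarIdx' N) :
    haarIncrMap N (Pi.single i 1) = haarIncr N i := by
  simp [haarIncrMap]

theorem wMapY_eq (N : ℕ) (y : ℝ) (z : HaarIdx' N → ℝ) :
    wMapY N y z = y • haarNegIncr N + haarIncrMap N z := by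
  ext ℓ
  simp [wMapY, haarIncrMap, Fintype.linearCombination_apply, haarIncr, haarNegIncr]

theorem integral_comp_wMapY_mul_stdGaussPDF (N : ℕ) (u : (Fin (2 ^ (N + 1)) → ℝ) → ℝ) :
    (fun z => ∫ y, u (wMapY N y z) * stdGaussPDF y) =
      (fun x => ∫ y, stdGaussPDF y • u (y • haarNegIncr N + x)) ∘ haarIncrMap N := by
  ext z
  simp [wMapY_eq, mul_comm]

theorem sum_norm_haarIncr_le (N : ℕ) (i : HaarIdx' N) :
    ∑ ℓ, ‖haarIncr N i ℓ‖ ≤ 2 ^ (-((i.1 : ℕ) : ℝ) / 2) := by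
  have hψ := integrable_haarFn i.1 i.2
  have hΨ : ∀ a b, haarAnti i.1 i.2 b - haarAnti i.1 i.2 a = ∫ s in a..b, haarFn i.1 i.2 s :=
    fun _ _ =>
      intervalIntegral.integral_interval_sub_left hψ.intervalIntegrable hψ.intervalIntegrable
  simp only [haarIncr, Real.norm_eq_abs, hΨ]
  rw [Fin.sum_univ_eq_sum_range
    (fun ℓ => |∫ s in gridPt N ℓ..gridPt N (ℓ + 1), haarFn i.1 i.2 s|)]
  exact (sum_abs_intervalIntegral_le_integral_abs hψ (monotone_gridPt N) _).trans
    (integral_abs_haarFn_le _ _)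

theorem abs_iteratedFDeriv_comp_apply_single_le {ι : Type*} [Fintype ι] [DecidableEq ι]
    {g : ℝ → ℝ} {F : (ι → ℝ) → ℝ} {p : ℕ} {Cg c : ℝ} (hg : ContDiff ℝ p g) (hF : ContDiff ℝ p F)
    (hgb : ∀ j ≤ p, ∀ t, |iteratedDeriv j g t| ≤ Cg)
    (hFb : ∀ j, 1 ≤ j → j ≤ p → ∀ (x : ι → ℝ) (r : Fin j → ι),
      |iteratedFDeriv ℝ j F x (fun i => Pi.single (r i) 1)| ≤ c)
    {j : ℕ} (hj : j ≤ p) (x : ι → ℝ) (r : Fin j → ι) :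
    |iteratedFDeriv ℝ j (g ∘ F) x (fun i => Pi.single (r i) 1)| ≤
      Fintype.card (OrderedFinpartition j) * (Cg * max 1 c ^ j) :=
  abs_iteratedFDeriv_comp_apply_le (hg.of_le (by exact_mod_cast hj))
    (hF.of_le (by exact_mod_cast hj)) x (fun i hi => hgb i (hi.trans hj) _) _
    (fun i hi₁ hi₂ w => hFb i hi₁ (hi₂.trans hj) x (fun k => r (w k)))

theorem smooth_payoff_haar_bound_general (p : ℕ) (c Cg : ℝ) :
    ∃ C : ℝ, ∀ (N : ℕ) (g : ℝ → ℝ) (F : (Fin (2^(N+1)) → ℝ) → ℝ),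
      ContDiff ℝ p g →
      (∀ j ≤ p, ∀ x : ℝ, |iteratedDeriv j g x| ≤ Cg) →
      ContDiff ℝ p F →
      (∀ j, 1 ≤ j → j ≤ p → ∀ (x : Fin (2^(N+1)) → ℝ) (v : Fin j → Fin (2^(N+1))),
        |iteratedFDeriv ℝ j F x (fun i => Pi.single (v i) 1)| ≤ c) →
      ContDiff ℝ p (fun z : HaarIdx' N → ℝ => ∫ y : ℝ, g (F (wMapY N y z)) * stdGaussPDF y) ∧
      ∀ (idx : Fin p → HaarIdx' N) (z : HaarIdx' N → ℝ),
        |iteratedFDeriv ℝ p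
            (fun z' : HaarIdx' N → ℝ => ∫ y : ℝ, g (F (wMapY N y z')) * stdGaussPDF y) z
            (fun i => Pi.single (idx i) 1)| ≤
          C * (2:ℝ) ^ (-(∑ j, (((idx j).1 : ℕ) : ℝ)) / 2) := by
  set K : ℝ := Fintype.card (OrderedFinpartition p) * (Cg * max 1 c ^ p)
  refine ⟨K, fun N g F hg hgb hF hFb => ?_⟩
  have hK : 0 ≤ K := by
    have := (abs_nonneg _).trans (hgb 0 p.zero_le 0)
    positivity
  have hu : ContDiff ℝ p (g ∘ F) := hg.comp hF
  have hcoord := fun j (hj : j ≤ p) => abs_iteratedFDeriv_comp_apply_single_le hg hF hgb hFb hj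
  have hbdd : ∀ j ≤ p, ∃ B, ∀ x, ‖iteratedFDeriv ℝ j (g ∘ F) x‖ ≤ B := fun j hj =>
    ⟨_, fun x => ContinuousMultilinearMap.norm_le_of_norm_apply_single_le _ (hcoord j hj x)⟩
  have hf : AEStronglyMeasurable (fun y : ℝ => y • haarNegIncr N) := by fun_prop
  have hG := contDiff_integral_smul_comp_add integrable_stdGaussPDF hf hu hbdd
  rw [show (fun z => ∫ y, g (F (wMapY N y z)) * stdGaussPDF y) = _ from
    integral_comp_wMapY_mul_stdGaussPDF N (g ∘ F)]
  refine ⟨hG.comp (haarIncrMap N).contDiff, fun idx z => ?_⟩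
  rw [(haarIncrMap N).iteratedFDeriv_comp_right hG z le_rfl]
  simp only [ContinuousMultilinearMap.compContinuousLinearMap_apply, haarIncrMap_single]
  calc _ ≤ (∫ y, ‖stdGaussPDF y‖) * (K * ∏ j, ∑ ℓ, ‖haarIncr N (idx j) ℓ‖) :=
        norm_iteratedFDeriv_integral_smul_comp_add_apply_le integrable_stdGaussPDF hf hu hbdd _
          (fun x => ContinuousMultilinearMap.norm_apply_le_of_norm_apply_single_le _
            (hcoord p le_rfl x) _) _
    _ ≤ K * ∏ j, (2 : ℝ) ^ (-(((idx j).1 : ℕ) : ℝ) / 2) := by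
        rw [integral_norm_stdGaussPDF, one_mul]
        gcongr with j
        exact sum_norm_haarIncr_le N (idx j)
    _ = K * 2 ^ (-(∑ j, (((idx j).1 : ℕ) : ℝ)) / 2) := by
        rw [← Real.rpow_sum_of_pos two_pos]
        simp [Finset.sum_div, neg_div]

/-- smooth-payoff version of Theorem 3.1: for `g` p-times continuously
differentiable with all derivatives up to order `p` bounded by `Cg`, and `F` p-times
continuously differentiable with all partial derivatives of orders 1 through `p` bounded
by `c`, the pre-integrated function `H(z) = ∫ g(F(w(y,z))) φ(y) dy` is p-times
differentiable and its p-th order partial derivatives satisfy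
`|∂^p H/∂z_{n_1,k_1}⋯∂z_{n_p,k_p}| ≤ C 2^{-(n_1+⋯+n_p)/2}` with `C` independent of `N`
and of the indices. -/
theorem smooth_payoff_haar_bound (p : ℕ) (hp : 1 ≤ p) (c Cg : ℝ) :
    ∃ C : ℝ, ∀ (N : ℕ) (g : ℝ → ℝ) (F : (Fin (2^(N+1)) → ℝ) → ℝ),
      ContDiff ℝ p g →
      (∀ j ≤ p, ∀ x : ℝ, |iteratedDeriv j g x| ≤ Cg) →
      ContDiff ℝ p F →
      (∀ j, 1 ≤ j → j ≤ p → ∀ (x : Fin (2^(N+1)) → ℝ) (v : Fin j → Fin (2^(N+1))),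
        |iteratedFDeriv ℝ j F x (fun i => Pi.single (v i) 1)| ≤ c) →
      ContDiff ℝ p (fun z : HaarIdx' N → ℝ => ∫ y : ℝ, g (F (wMapY N y z)) * stdGaussPDF y) ∧
      ∀ (idx : Fin p → HaarIdx' N) (z : HaarIdx' N → ℝ),
        |iteratedFDeriv ℝ p
            (fun z' : HaarIdx' N → ℝ => ∫ y : ℝ, g (F (wMapY N y z')) * stdGaussPDF y) z
            (fun i => Pi.single (idx i) 1)| ≤
          C * (2:ℝ) ^ (-(∑ j, (((idx j).1 : ℕ) : ℝ)) / 2) :=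
  smooth_payoff_haar_bound_general p c Cg
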